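/- Let m > 0, ω(k) = √(‖k‖² + m²), let h : ℝ³ → ℂ be continuous, L > 0, and let χ_I : ℝ³ → ℂ be measurable with ∫_{ℝ³} (1 + ‖x‖)·|χ_I(x)| dx < ∞. Then lim_{V→∞} ∫_{ℝ³} |χ_I(x)|·‖ω^{-1/2}·((h_x)_L − (h_x)_{L,V})‖₂ dx = 0, where ω^{-1/2}·g denotes the function k ↦ ω(k)^{-1/2}·g(k). -/

import Mathlib

open MeasureTheory
open scoped RealInnerProductSpace

/-- The nearest lattice point `q_V(k)` of the momentum lattice `Γ_V`, defined
componentwise by `q_V(k)_j = (2π/V)·⌊V·k_j/(2π) + 1/2⌋`. -/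
noncomputable def qV (V : ℝ) (k : EuclideanSpace ℝ (Fin 3)) :
    EuclideanSpace ℝ (Fin 3) :=
  WithLp.toLp 2 fun j => (2 * Real.pi / V) * (⌊V * k j / (2 * Real.pi) + 1 / 2⌋ : ℤ)

/-- The Klein–Gordon one-particle energy `ω(k) = √(‖k‖² + m²)`. -/
noncomputable def omegaKG (m : ℝ) (k : EuclideanSpace ℝ (Fin 3)) : ℝ :=
  Real.sqrt (‖k‖ ^ 2 + m ^ 2)

/-- The cube `I_L = [−L,L]³ ⊂ ℝ³`. -/
def cubeI (L : ℝ) : Set (EuclideanSpace ℝ (Fin 3)) :=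
  {k | ∀ j, k j ∈ Set.Icc (-L) L}

/-- The cutoff one-particle function `(h_x)_L(k) = h(k)·e^{i⟨k,x⟩}·χ_{I_L}(k)`. -/
noncomputable def hxL (h : EuclideanSpace ℝ (Fin 3) → ℂ) (L : ℝ)
    (x : EuclideanSpace ℝ (Fin 3)) : EuclideanSpace ℝ (Fin 3) → ℂ :=
  (cubeI L).indicator fun k => h k * Complex.exp (Complex.I * (⟪k, x⟫ : ℝ))

/-- The lattice approximation
`(h_x)_{L,V}(k) = h(q_V(k))·e^{i⟨q_V(k),x⟩}·χ_{I_L}(k)`. -/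
noncomputable def hxLV (h : EuclideanSpace ℝ (Fin 3) → ℂ) (L V : ℝ)
    (x : EuclideanSpace ℝ (Fin 3)) : EuclideanSpace ℝ (Fin 3) → ℂ :=
  (cubeI L).indicator fun k =>
    h (qV V k) * Complex.exp (Complex.I * (⟪qV V k, x⟫ : ℝ))

/-!
The lattice point `q_V(k)` lies within `√3 π / V` of `k`, uniformly in `k`.
Hence, by uniform continuity of `h` on a compact neighbourhood of `I_L` and
`|e^{iθ} - e^{iφ}| ≤ |θ - φ|`, for every `ε > 0` and all large `V` the difference
`(h_x)_L - (h_x)_{L,V}` is bounded by `ε (1 + ‖x‖)` on `I_L` (and vanishes outside it).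
Since `ω ≥ m`, its `ω^{-1/2}`-weighted `L²` norm is at most
`ε (1 + ‖x‖) m^{-1/2} |I_L|^{1/2}`, and integrating against `|χ_I|` gives a bound
`ε · C · ∫ (1 + ‖x‖) |χ_I|`.
-/

open Real Filter Topology
open scoped ENNReal

theorem EuclideanSpace.norm_le_sqrt_card_mul {ι : Type*} [Fintype ι] (y : EuclideanSpace ℝ ι)
    {a : ℝ} (ha : 0 ≤ a) (hy : ∀ i, |y i| ≤ a) : ‖y‖ ≤ √(Fintype.card ι) * a := by
  rw [EuclideanSpace.norm_eq, ← Real.sqrt_sq ha, ← Real.sqrt_mul (Nat.cast_nonneg _)]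
  gcongr
  calc ∑ i, ‖y i‖ ^ 2 ≤ ∑ _ : ι, a ^ 2 := by
        gcongr with i
        exact (Real.norm_eq_abs _).trans_le (hy i)
    _ = Fintype.card ι * a ^ 2 := by simp

theorem TendstoUniformlyOn.comp_continuous_of_isCompact {ι E F : Type*} [PseudoMetricSpace E]
    [ProperSpace E] [UniformSpace F] {l : Filter ι} {q : ι → E → E} {s : Set E}
    (hs : IsCompact s) (hq : TendstoUniformlyOn q id l s) {h : E → F} (hh : Continuous h) :
    TendstoUniformlyOn (fun i x => h (q i x)) h l s := by
  have hK : IsCompact (Metric.cthickening 1 s) := hs.cthickening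
  refine (hK.uniformContinuousOn_of_continuous hh.continuousOn).comp_tendstoUniformlyOn_eventually
    ?_ (fun x hx => Metric.self_subset_cthickening s hx) hq
  filter_upwards [Metric.tendstoUniformlyOn_iff.1 hq 1 one_pos] with i hi x hx
  exact Metric.mem_cthickening_of_dist_le _ x 1 s hx (by rw [dist_comm]; exact (hi x hx).le)

open Complex in
theorem norm_mul_exp_sub_mul_exp_le (a b : ℂ) (θ φ : ℝ) :
    ‖a * exp (I * θ) - b * exp (I * φ)‖ ≤ ‖a - b‖ + ‖a‖ * |θ - φ| := by
  have hsplit : a * exp (I * θ) - b * exp (I * φ)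
      = (a - b) * exp (I * φ) + a * exp (I * φ) * (exp (I * (θ - φ : ℝ)) - 1) := by
    rw [mul_assoc, mul_sub, ← Complex.exp_add]; push_cast; ring_nf
  calc ‖a * exp (I * θ) - b * exp (I * φ)‖
      ≤ ‖a - b‖ * ‖exp (I * φ)‖
          + ‖a‖ * ‖exp (I * φ)‖ * ‖exp (I * (θ - φ : ℝ)) - 1‖ := by
        rw [hsplit, ← norm_mul, ← norm_mul, ← norm_mul]; exact norm_add_le _ _
    _ ≤ ‖a - b‖ + ‖a‖ * |θ - φ| := by
        rw [norm_exp_I_mul_ofReal, mul_one, mul_one]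
        gcongr
        exact norm_exp_I_mul_ofReal_sub_one_le

theorem toReal_eLpNorm_le_of_norm_le {α E : Type*} [MeasurableSpace α] [NormedAddCommGroup E]
    {μ : Measure α} {s : Set α} (hs : MeasurableSet s) (hμs : μ s ≠ ∞) (p : ℝ≥0∞)
    {f : α → E} {c : ℝ} (hc : 0 ≤ c) (hf : ∀ x, ‖f x‖ ≤ c)
    (hf0 : ∀ x ∉ s, f x = 0) :
    (eLpNorm f p μ).toReal ≤ (μ s).toReal ^ p.toReal⁻¹ * c := by
  have hfs : s.indicator f = f := Set.indicator_eq_self.2 (Function.support_subset_iff'.2 hf0)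
  have hbound := eLpNorm_le_of_ae_bound (μ := μ.restrict s) (p := p) (Eventually.of_forall hf)
  rw [← eLpNorm_indicator_eq_eLpNorm_restrict hs, hfs, Measure.restrict_apply_univ] at hbound
  calc (eLpNorm f p μ).toReal ≤ (μ s ^ p.toReal⁻¹ * ENNReal.ofReal c).toReal :=
        ENNReal.toReal_mono (by finiteness) hbound
    _ = (μ s).toReal ^ p.toReal⁻¹ * c := by
        rw [ENNReal.toReal_mul, ENNReal.toReal_rpow, ENNReal.toReal_ofReal hc]

theorem tendsto_integral_nhds_zero_of_eventually_le_mul {α ι : Type*} [MeasurableSpace α]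
    {μ : Measure α} {l : Filter ι} {F : ι → α → ℝ} {g : α → ℝ} (hg : Integrable g μ)
    (hF0 : ∀ i x, 0 ≤ F i x)
    (hF : ∀ ε > 0, ∀ᶠ i in l, ∀ x, F i x ≤ ε * g x) :
    Tendsto (fun i => ∫ x, F i x ∂μ) l (𝓝 0) := by
  refine Metric.tendsto_nhds.2 fun ε hε => ?_
  set G := ∫ x, g x ∂μ
  have hε' : 0 < ε / (|G| + 1) := by positivity
  filter_upwards [hF _ hε'] with i hi
  have hint : ∫ x, F i x ∂μ ≤ ε / (|G| + 1) * G := by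
    rw [← integral_const_mul]
    exact integral_mono_of_nonneg (Eventually.of_forall (hF0 i)) (hg.const_mul _)
      (Eventually.of_forall hi)
  rw [Real.dist_0_eq_abs, abs_of_nonneg (integral_nonneg (hF0 i))]
  calc _ ≤ ε / (|G| + 1) * |G| := hint.trans (by gcongr; exact le_abs_self G)
    _ < ε := by
        rw [div_mul_eq_mul_div, div_lt_iff₀ (by positivity)]
        nlinarith [abs_nonneg G]

theorem isCompact_cubeI (L : ℝ) : IsCompact (cubeI L) := by
  have hcube :
      cubeI L = EuclideanSpace.equiv (Fin 3) ℝ ⁻¹' Set.univ.pi fun _ => Set.Icc (-L) L := by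
    ext k; simp only [cubeI, Set.mem_ofPred_eq, Set.mem_preimage, Set.mem_univ_pi]; rfl
  rw [hcube]
  exact (EuclideanSpace.equiv (Fin 3) ℝ).toHomeomorph.isCompact_preimage.2
    (isCompact_univ_pi fun _ => isCompact_Icc)

theorem abs_qV_sub_le {V : ℝ} (hV : 0 < V) (k : EuclideanSpace ℝ (Fin 3)) (j : Fin 3) :
    |qV V k j - k j| ≤ π / V := by
  set t := V * k j / (2 * π)
  have hk : k j = 2 * π / V * t := by simp only [t]; field_simp
  have hq : qV V k j = 2 * π / V * ⌊t + 1 / 2⌋ := rfl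
  have hround : |(⌊t + 1 / 2⌋ : ℝ) - t| ≤ 1 / 2 := by
    have := Int.floor_le (t + 1 / 2)
    have := Int.lt_floor_add_one (t + 1 / 2)
    exact abs_le.2 ⟨by linarith, by linarith⟩
  calc |qV V k j - k j| = 2 * π / V * |(⌊t + 1 / 2⌋ : ℝ) - t| := by
        rw [hq, hk, ← mul_sub, abs_mul, abs_of_pos (by positivity)]
    _ ≤ 2 * π / V * (1 / 2) := by gcongr
    _ = π / V := by ring

theorem norm_qV_sub_le {V : ℝ} (hV : 0 < V) (k : EuclideanSpace ℝ (Fin 3)) :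
    ‖qV V k - k‖ ≤ √3 * (π / V) := by
  simpa using EuclideanSpace.norm_le_sqrt_card_mul (qV V k - k) (by positivity) (abs_qV_sub_le hV k)

theorem tendstoUniformly_qV : TendstoUniformly qV id atTop := by
  refine Metric.tendstoUniformly_iff.2 fun ε hε => ?_
  have hlim : Tendsto (fun V : ℝ => √3 * (π / V)) atTop (𝓝 0) := by
    simpa using (tendsto_const_nhds.div_atTop tendsto_id).const_mul √3
  filter_upwards [hlim.eventually (gt_mem_nhds hε), eventually_gt_atTop 0] with V hVε hV k
  rw [dist_comm, dist_eq_norm]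
  exact (norm_qV_sub_le hV k).trans_lt hVε

theorem inv_sqrt_omegaKG_le {m : ℝ} (hm : 0 < m) (k : EuclideanSpace ℝ (Fin 3)) :
    (√(omegaKG m k))⁻¹ ≤ (√m)⁻¹ := by
  have hmω : m ≤ omegaKG m k := Real.le_sqrt_of_sq_le (by nlinarith [sq_nonneg ‖k‖])
  gcongr

theorem eventually_norm_hxL_sub_hxLV_le {h : EuclideanSpace ℝ (Fin 3) → ℂ} (hh : Continuous h)
    (L : ℝ) {ε : ℝ} (hε : 0 < ε) :
    ∀ᶠ V in atTop, ∀ x k, ‖hxL h L x k - hxLV h L V x k‖ ≤ ε * (1 + ‖x‖) := by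
  obtain ⟨M, hM0, hM⟩ := ((isCompact_cubeI L).image hh).isBounded.exists_pos_norm_le
  have hclose := Metric.tendstoUniformly_iff.1 tendstoUniformly_qV (ε / M) (by positivity)
  have hcomp := Metric.tendstoUniformlyOn_iff.1
    ((tendstoUniformly_qV.tendstoUniformlyOn).comp_continuous_of_isCompact (isCompact_cubeI L) hh)
    ε hε
  filter_upwards [hclose, hcomp] with V hVclose hVcomp x k
  rcases em' (k ∈ cubeI L) with hk | hk
  · simp only [hxL, hxLV, Set.indicator_of_notMem hk, sub_self, norm_zero]; positivity
  have hphase : |⟪k, x⟫ - ⟪qV V k, x⟫| ≤ ε / M * ‖x‖ := by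
    rw [← inner_sub_left]
    refine (abs_real_inner_le_norm _ _).trans ?_
    gcongr
    rw [← dist_eq_norm]
    exact (hVclose k).le
  simp only [hxL, hxLV, Set.indicator_of_mem hk]
  calc _ ≤ ‖h k - h (qV V k)‖ + ‖h k‖ * |⟪k, x⟫ - ⟪qV V k, x⟫| :=
        norm_mul_exp_sub_mul_exp_le _ _ _ _
    _ ≤ ε + M * (ε / M * ‖x‖) := by
        gcongr
        · rw [← dist_eq_norm]; exact (hVcomp k hk).le
        · exact hM _ (Set.mem_image_of_mem h hk)
    _ = ε * (1 + ‖x‖) := by field_simp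

theorem eventually_toReal_eLpNorm_inv_sqrt_omegaKG_mul_hxL_sub_hxLV_le {m : ℝ} (hm : 0 < m)
    {h : EuclideanSpace ℝ (Fin 3) → ℂ} (hh : Continuous h) (L : ℝ) {ε : ℝ}
    (hε : 0 < ε) :
    ∀ᶠ V in atTop, ∀ x, (eLpNorm (fun k => ((√(omegaKG m k))⁻¹ : ℝ) *
        (hxL h L x k - hxLV h L V x k)) 2 volume).toReal
      ≤ ε * ((volume (cubeI L)).toReal ^ (1 / 2 : ℝ) * (√m)⁻¹ * (1 + ‖x‖)) := by
  filter_upwards [eventually_norm_hxL_sub_hxLV_le hh L hε] with V hV x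
  have hcube := isCompact_cubeI L
  calc _ ≤ (volume (cubeI L)).toReal ^ (2 : ℝ≥0∞).toReal⁻¹ * ((√m)⁻¹ * (ε * (1 + ‖x‖))) := by
        refine toReal_eLpNorm_le_of_norm_le hcube.measurableSet hcube.measure_lt_top.ne 2
          (by positivity) (fun k => ?_) (fun k hk => by simp [hxL, hxLV, hk])
        rw [norm_mul, Complex.norm_real, Real.norm_of_nonneg (by positivity)]
        exact mul_le_mul (inv_sqrt_omegaKG_le hm k) (hV x k) (norm_nonneg _) (by positivity)
    _ = _ := by norm_num; ring

theorem tendsto_integral_chi_mul_eLpNorm_sqrtInvOmega_hxL_sub_hxLV_general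
    (m : ℝ) (hm : 0 < m)
    (h : EuclideanSpace ℝ (Fin 3) → ℂ) (hh : Continuous h) (L : ℝ)
    (χI : EuclideanSpace ℝ (Fin 3) → ℂ)
    (hχ : Integrable (fun x => (1 + ‖x‖) * ‖χI x‖) volume) :
    Filter.Tendsto
      (fun V : ℝ => ∫ x, ‖χI x‖ *
        (eLpNorm
          (fun k => ((Real.sqrt (omegaKG m k))⁻¹ : ℝ) *
            (hxL h L x k - hxLV h L V x k)) 2 volume).toReal)
      Filter.atTop (nhds 0) := by
  set C := (volume (cubeI L)).toReal ^ (1 / 2 : ℝ) * (√m)⁻¹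
  refine tendsto_integral_nhds_zero_of_eventually_le_mul (hχ.const_mul C)
    (fun V x => by positivity) fun ε hε => ?_
  filter_upwards [eventually_toReal_eLpNorm_inv_sqrt_omegaKG_mul_hxL_sub_hxLV_le hm hh L hε]
    with V hV x
  calc _ ≤ ‖χI x‖ * (ε * (C * (1 + ‖x‖))) := by gcongr; exact hV x
    _ = ε * (C * ((1 + ‖x‖) * ‖χI x‖)) := by ring

/-- Let `m > 0`, `ω(k) = √(‖k‖² + m²)`, `h : ℝ³ → ℂ` continuous, `L > 0`, and
`χ_I : ℝ³ → ℂ` measurable with `∫ (1 + ‖x‖)·|χ_I(x)| dx < ∞`.  Then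
`lim_{V→∞} ∫ |χ_I(x)|·‖ω^{-1/2}·((h_x)_L − (h_x)_{L,V})‖₂ dx = 0`, where
`ω^{-1/2}·g` is the function `k ↦ ω(k)^{-1/2}·g(k)`. -/
theorem tendsto_integral_chi_mul_eLpNorm_sqrtInvOmega_hxL_sub_hxLV
    (m : ℝ) (hm : 0 < m)
    (h : EuclideanSpace ℝ (Fin 3) → ℂ) (hh : Continuous h) (L : ℝ) (hL : 0 < L)
    (χI : EuclideanSpace ℝ (Fin 3) → ℂ) (hχm : Measurable χI)
    (hχ : Integrable (fun x => (1 + ‖x‖) * ‖χI x‖) volume) :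
    Filter.Tendsto
      (fun V : ℝ => ∫ x, ‖χI x‖ *
        (eLpNorm
          (fun k => ((Real.sqrt (omegaKG m k))⁻¹ : ℝ) *
            (hxL h L x k - hxLV h L V x k)) 2 volume).toReal)
      Filter.atTop (nhds 0) :=
  tendsto_integral_chi_mul_eLpNorm_sqrtInvOmega_hxL_sub_hxLV_general m hm h hh L χI hχ
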